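/- Let p and p' be PMFs on β × α, let v = p.map snd and v' = p'.map snd be their second marginals, and let S : α → PMF β be a kernel. If Δ(p, σ_S(v)) ≤ ε₁, Δ(v, v') ≤ ε₂, and Δ(p', σ_S(v')) ≤ ε₃, then Δ(p, p') ≤ ε₁ + ε₂ + ε₃. (This is the distributional core of Theorem 3: a data collector that is ε₁-weakly deletion-compliant in both the real and ideal executions and ε₂-privacy-preserving—meaning the environment's views in the real and ideal executions are ε₂-close—has real and ideal (state, view) joint distributions that are close, i.e., it is strongly deletion-compliant; the middle step uses that Δ(σ_S(v), σ_S(v')) ≤ Δ(v, v').) -/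
import Mathlib

/-- Statistical distance between two PMFs: half the ℓ¹ distance. -/
noncomputable def SD {α : Type*} (p q : PMF α) : ℝ :=
  (1 / 2) * ∑' x, |(p x).toReal - (q x).toReal|

/-- `sigmaSim S v` samples `a ~ v`, then `b ~ S a`, and outputs the pair `(b, a)`. -/
noncomputable def sigmaSim {α β : Type*} (S : α → PMF β) (v : PMF α) : PMF (β × α) :=
  v.bind fun a => (S a).map fun b => (b, a)

lemma pmf_summable {α : Type*} (p : PMF α) : Summable fun x => (p x).toReal := by
  apply ENNReal.summable_toReal
  simp [p.tsum_coe]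

lemma abs_summable {α : Type*} (p q : PMF α) :
    Summable fun x => |(p x).toReal - (q x).toReal| := by
  apply Summable.of_nonneg_of_le (fun x => abs_nonneg _)
    (fun x => ?_) ((pmf_summable p).add (pmf_summable q))
  have h1 : (0:ℝ) ≤ (p x).toReal := ENNReal.toReal_nonneg
  have h2 : (0:ℝ) ≤ (q x).toReal := ENNReal.toReal_nonneg
  rw [abs_sub_le_iff]; constructor <;> linarith

lemma SD_symm {α : Type*} (p q : PMF α) : SD p q = SD q p := by
  unfold SD; congr 1; exact tsum_congr fun x => abs_sub_comm _ _

lemma SD_triangle {α : Type*} (p q r : PMF α) : SD p r ≤ SD p q + SD q r := by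
  unfold SD
  rw [← mul_add, ← Summable.tsum_add (abs_summable p q) (abs_summable q r)]
  gcongr (1/2) * ?_
  exact Summable.tsum_le_tsum (fun x => abs_sub_le _ _ _) (abs_summable p r)
    ((abs_summable p q).add (abs_summable q r))

lemma sigma_apply {α β : Type*} (S : α → PMF β) (v : PMF α) (b : β) (a : α) :
    sigmaSim S v (b, a) = v a * S a b := by
  classical
  simp only [sigmaSim, PMF.bind_apply, PMF.map_apply, Prod.mk.injEq]
  rw [tsum_eq_single a]
  · rw [tsum_eq_single b]
    · simp
    · intro b' hb'; simp [Ne.symm hb']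
  · intro a' ha'; simp [Ne.symm ha']

lemma SD_sigma {α β : Type*} (S : α → PMF β) (v v' : PMF α) :
    SD (sigmaSim S v) (sigmaSim S v') ≤ SD v v' := by
  unfold SD
  gcongr (1/2) * ?_
  have key : ∀ x : β × α, |((sigmaSim S v) x).toReal - ((sigmaSim S v') x).toReal|
      = |(v x.2).toReal - (v' x.2).toReal| * (S x.2 x.1).toReal := by
    rintro ⟨b, a⟩
    simp only [sigma_apply]
    rw [ENNReal.toReal_mul, ENNReal.toReal_mul, ← sub_mul, abs_mul,
      abs_of_nonneg (ENNReal.toReal_nonneg)]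
  have hs : Summable (fun x : β × α =>
      |(v x.2).toReal - (v' x.2).toReal| * (S x.2 x.1).toReal) :=
    (abs_summable (sigmaSim S v) (sigmaSim S v')).congr key
  calc ∑' x : β × α, |((sigmaSim S v) x).toReal - ((sigmaSim S v') x).toReal|
      = ∑' x : β × α, |(v x.2).toReal - (v' x.2).toReal| * (S x.2 x.1).toReal :=
        tsum_congr key
    _ = ∑' (b : β) (a : α), |(v a).toReal - (v' a).toReal| * (S a b).toReal :=
        Summable.tsum_prod' hs (fun b => hs.prod_factor b)
    _ = ∑' (a : α) (b : β), |(v a).toReal - (v' a).toReal| * (S a b).toReal :=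
        Summable.tsum_comm' hs.prod_symm (fun a => hs.prod_symm.prod_factor a) (fun b => hs.prod_factor b)
    _ = ∑' (a : α), |(v a).toReal - (v' a).toReal| := by
        refine tsum_congr fun a => ?_
        rw [tsum_mul_left]
        have h1 : ∑' b, (S a b).toReal = 1 := by
          rw [← ENNReal.tsum_toReal_eq (fun b => (S a).apply_ne_top b), (S a).tsum_coe,
            ENNReal.toReal_one]
        rw [h1, mul_one]
    _ ≤ ∑' (a : α), |(v a).toReal - (v' a).toReal| := le_refl _

/-- Weak deletion-compliance (in both executions) plus privacy-preservation implies
strong deletion-compliance: the real and ideal joint (state, view) distributions are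
`ε₁ + ε₂ + ε₃`-close. -/
theorem strong_from_weak_and_privacy {α β : Type*} [Countable α] [Countable β]
    (p p' : PMF (β × α)) (S : α → PMF β) (ε₁ ε₂ ε₃ : ℝ)
    (h₁ : SD p (sigmaSim S (p.map Prod.snd)) ≤ ε₁)
    (h₂ : SD (p.map Prod.snd) (p'.map Prod.snd) ≤ ε₂)
    (h₃ : SD p' (sigmaSim S (p'.map Prod.snd)) ≤ ε₃) :
    SD p p' ≤ ε₁ + ε₂ + ε₃ := by
  calc SD p p' ≤ SD p (sigmaSim S (p.map Prod.snd)) +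
        SD (sigmaSim S (p.map Prod.snd)) (sigmaSim S (p'.map Prod.snd)) +
        SD (sigmaSim S (p'.map Prod.snd)) p' := by
          have t1 := SD_triangle p (sigmaSim S (p.map Prod.snd)) p'
          have t2 := SD_triangle (sigmaSim S (p.map Prod.snd))
            (sigmaSim S (p'.map Prod.snd)) p'
          linarith
    _ ≤ ε₁ + ε₂ + ε₃ := by
          have := SD_sigma S (p.map Prod.snd) (p'.map Prod.snd)
          rw [SD_symm (sigmaSim S (p'.map Prod.snd)) p']
          gcongr ; linarith
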